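/- Let C be the category whose objects are the natural numbers and whose morphisms m ⟶ n are all functions Fin(m+1) → Fin(n+1), let D be the wide subcategory of C with only the injective functions, ι : D ⥤ C the inclusion, and H the left Kan extension functor (Dᵒᵖ ⥤ Type) ⥤ (Cᵒᵖ ⥤ Type) along ιᵒᵖ. Then for every presheaf S : Dᵒᵖ ⥤ Type and every n ∈ ℕ, there is a bijection between H(S)(n) and the quotient of the set of triples (p, f, γ) — with p ∈ ℕ, f : Fin(n+1) → Fin(p+1) a surjective function, and γ ∈ S(p) — by the equivalence relation identifying (p, f, γ) with (p, f', γ') whenever there is a bijection φ : Fin(p+1) → Fin(p+1) (a morphism of D) with f' = φ ∘ f and γ = S(φ)(γ'). -/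

import Mathlib

open CategoryTheory Opposite

/-- The category whose objects are the natural numbers and whose morphisms
`m ⟶ n` are all functions `Fin (m+1) → Fin (n+1)`. -/
structure UCat where
  len : ℕ

instance : Category UCat where
  Hom a b := Fin (a.len + 1) → Fin (b.len + 1)
  id _ := id
  comp f g := g ∘ f

/-- The wide subcategory of `UCat` with only the injective functions. -/
structure UDCat where
  len : ℕ

instance : Category UDCat where
  Hom a b := {f : Fin (a.len + 1) → Fin (b.len + 1) // Function.Injective f}
  id _ := ⟨id, Function.injective_id⟩
  comp f g := ⟨g.1 ∘ f.1, g.2.comp f.2⟩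

/-- The inclusion functor. -/
def inclUDC : UDCat ⥤ UCat where
  obj a := ⟨a.len⟩
  map f := f.1

/-- The type of triples `(p, f, γ)` with `p ∈ ℕ`, `f : Fin (n+1) → Fin (p+1)`
surjective, and `γ ∈ S(p)`. -/
def Triple (S : UDCatᵒᵖ ⥤ Type) (n : ℕ) : Type :=
  {t : Σ p : ℕ, (Fin (n + 1) → Fin (p + 1)) × S.obj (op (UDCat.mk p)) //
    Function.Surjective t.2.1}

/-- The relation identifying `(p, f, γ)` with `(p', f', γ')` whenever there is a
bijection `φ : Fin (p+1) → Fin (p'+1)` (a morphism of the injective category) with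
`f' = φ ∘ f` and `γ = S(φ)(γ')`. (A bijection between `Fin (p+1)` and `Fin (p'+1)`
forces `p = p'`.) -/
def TripleRel (S : UDCatᵒᵖ ⥤ Type) (n : ℕ) (t t' : Triple S n) : Prop :=
  ∃ (φ : Fin (t.1.1 + 1) → Fin (t'.1.1 + 1)) (hφ : Function.Bijective φ),
    t'.1.2.1 = φ ∘ t.1.2.1 ∧
    t.1.2.2 = S.map (Quiver.Hom.op
      (⟨φ, hφ.injective⟩ : UDCat.mk t.1.1 ⟶ UDCat.mk t'.1.1)) t'.1.2.2

/-!
A map `f : Fin (n+1) → Fin (p+1)` factors as a surjection onto its image followed by an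
injection, and any two surjective-injective factorizations of `f` differ by a unique bijection of
the middle term. Hence every triple `(p, f, γ)`, surjective or not, has a well-defined class
`Triple.cls S f γ` (restrict `γ` to the image of `f`), and `(p, φ ∘ f, γ)` has the class of
`(p, f, S(φ) γ)` for injective `φ`. Precomposition `(p, f, γ) ↦ (p, f ∘ g, γ)` therefore makes the
quotient of triples a presheaf on the category of all maps, and a morphism from it to `T`
amounts to a morphism `β : S ⟶ T ∘ ι`: evaluate at the classes of `(p, id, γ)`, and conversely
send `(p, f, γ)` to `T(f)(β γ)`. So the quotient is the value at `S` of a left adjoint of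
restriction along `ιᵒᵖ`, and left adjoints are unique up to isomorphism.
-/

theorem exists_bijective_of_comp_eq_comp {α β γ γ' : Type*} {s : α → γ} {i : γ → β}
    {s' : α → γ'} {i' : γ' → β} (h : i ∘ s = i' ∘ s') (hi : Function.Injective i)
    (hi' : Function.Injective i') (hs : Function.Surjective s) (hs' : Function.Surjective s') :
    ∃ ψ : γ → γ', Function.Bijective ψ ∧ s' = ψ ∘ s ∧ i = i' ∘ ψ := by
  have key : ∀ a, i (s a) = i' (s' a) := congrFun h
  have hsec : ∀ c, s (Function.surjInv hs c) = c := Function.rightInverse_surjInv hs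
  have hcomm : i = i' ∘ s' ∘ Function.surjInv hs := funext fun c => by
    simpa [hsec] using key (Function.surjInv hs c)
  have hψs : ∀ a, s' (Function.surjInv hs (s a)) = s' a :=
    fun a => hi' ((congrFun hcomm (s a)).symm.trans (key a))
  refine ⟨s' ∘ Function.surjInv hs, ⟨(hcomm ▸ hi).of_comp, fun c' => ?_⟩,
    funext fun a => (hψs a).symm, hcomm⟩
  obtain ⟨a, rfl⟩ := hs' c'
  exact ⟨s a, hψs a⟩

section ImageFactorization

variable {m p : ℕ} (f : Fin (m + 1) → Fin (p + 1))

def imageLen : ℕ := Fintype.card (Set.range f) - 1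

noncomputable def rangeEquivFin : Set.range f ≃ Fin (imageLen f + 1) :=
  Fintype.equivFinOfCardEq <| by
    have : 0 < Fintype.card (Set.range f) := Fintype.card_pos_iff.2 ⟨⟨f 0, 0, rfl⟩⟩
    unfold imageLen; omega

noncomputable def imageSurj : Fin (m + 1) → Fin (imageLen f + 1) :=
  rangeEquivFin f ∘ Set.rangeFactorization f

noncomputable def imageInj : Fin (imageLen f + 1) → Fin (p + 1) :=
  Subtype.val ∘ (rangeEquivFin f).symm

theorem imageSurj_surjective : Function.Surjective (imageSurj f) :=
  (rangeEquivFin f).surjective.comp Set.rangeFactorization_surjective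

theorem imageInj_injective : Function.Injective (imageInj f) :=
  Subtype.val_injective.comp (rangeEquivFin f).symm.injective

theorem imageInj_comp_imageSurj : imageInj f ∘ imageSurj f = f := by
  funext i
  simp [imageInj, imageSurj, Set.rangeFactorization]

end ImageFactorization

def UCat.homOfFun {a b : ℕ} (f : Fin (a + 1) → Fin (b + 1)) : UCat.mk a ⟶ UCat.mk b := f

def UDCat.homOfInjective {a b : ℕ} (f : Fin (a + 1) → Fin (b + 1)) (hf : Function.Injective f) :
    UDCat.mk a ⟶ UDCat.mk b :=
  ⟨f, hf⟩

theorem UDCat.homOfInjective_comp {a b c : ℕ} {f : Fin (a + 1) → Fin (b + 1)}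
    {g : Fin (b + 1) → Fin (c + 1)} (hf : Function.Injective f) (hg : Function.Injective g) :
    homOfInjective f hf ≫ homOfInjective g hg = homOfInjective (g ∘ f) (hg.comp hf) :=
  rfl

theorem naturality_homOfInjective {S : UDCatᵒᵖ ⥤ Type} {T : UCatᵒᵖ ⥤ Type}
    (β : S ⟶ inclUDC.op ⋙ T) {a b : ℕ} {f : Fin (a + 1) → Fin (b + 1)}
    (hf : Function.Injective f) (γ : S.obj (op (UDCat.mk b))) :
    β.app _ (S.map (UDCat.homOfInjective f hf).op γ) = T.map (UCat.homOfFun f).op (β.app _ γ) :=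
  β.naturality_apply _ γ

namespace Triple

variable (S : UDCatᵒᵖ ⥤ Type)

noncomputable def ofMap {n p : ℕ} (f : Fin (n + 1) → Fin (p + 1))
    (γ : S.obj (op (UDCat.mk p))) : Triple S n :=
  ⟨⟨imageLen f, imageSurj f, S.map (UDCat.homOfInjective _ (imageInj_injective f)).op γ⟩,
    imageSurj_surjective f⟩

noncomputable def cls {n p : ℕ} (f : Fin (n + 1) → Fin (p + 1)) (γ : S.obj (op (UDCat.mk p))) :
    Quot (TripleRel S n) :=
  Quot.mk _ (ofMap S f γ)

theorem cls_eq_mk_of_eq_comp {n p q : ℕ} {f : Fin (n + 1) → Fin (p + 1)}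
    {s : Fin (n + 1) → Fin (q + 1)} {i : Fin (q + 1) → Fin (p + 1)} (hs : Function.Surjective s)
    (hi : Function.Injective i) (hf : f = i ∘ s) (γ : S.obj (op (UDCat.mk p))) :
    cls S f γ = Quot.mk _ ⟨⟨q, s, S.map (UDCat.homOfInjective i hi).op γ⟩, hs⟩ := by
  obtain ⟨ψ, hψ, rfl, hi'⟩ := exists_bijective_of_comp_eq_comp
    ((imageInj_comp_imageSurj f).trans hf) (imageInj_injective f) hi (imageSurj_surjective f) hs
  refine Quot.sound ⟨ψ, hψ, rfl, ?_⟩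
  have : UDCat.homOfInjective _ (imageInj_injective f) =
      UDCat.homOfInjective ψ hψ.injective ≫ UDCat.homOfInjective i hi :=
    Subtype.ext hi'
  simp only [ofMap, this, op_comp, Functor.map_comp_apply]
  rfl

theorem mk_eq_cls {n : ℕ} (t : Triple S n) : Quot.mk _ t = cls S t.1.2.1 t.1.2.2 := by
  obtain ⟨⟨p, f, γ⟩, hf⟩ := t
  rw [cls_eq_mk_of_eq_comp S hf Function.injective_id (Function.id_comp f).symm]
  congr
  exact (S.map_id_apply _ γ).symm

theorem cls_comp_injective {n p p' : ℕ} (f : Fin (n + 1) → Fin (p + 1))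
    {φ : Fin (p + 1) → Fin (p' + 1)} (hφ : Function.Injective φ) (γ : S.obj (op (UDCat.mk p'))) :
    cls S (φ ∘ f) γ = cls S f (S.map (UDCat.homOfInjective φ hφ).op γ) := by
  rw [cls_eq_mk_of_eq_comp S (imageSurj_surjective f) (hφ.comp (imageInj_injective f))
    (by rw [Function.comp_assoc, imageInj_comp_imageSurj])]
  simp only [cls, ofMap, ← Functor.map_comp_apply, ← op_comp, UDCat.homOfInjective_comp]

noncomputable def pullback {m n : ℕ} (g : Fin (m + 1) → Fin (n + 1)) :
    Quot (TripleRel S n) → Quot (TripleRel S m) :=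
  Quot.lift (fun t => cls S (t.1.2.1 ∘ g) t.1.2.2) fun t t' ⟨φ, hφ, hf, hγ⟩ => by
    rw [hf, hγ, Function.comp_assoc]
    exact (cls_comp_injective S _ hφ.injective _).symm

theorem pullback_cls {m n p : ℕ} (g : Fin (m + 1) → Fin (n + 1)) (f : Fin (n + 1) → Fin (p + 1))
    (γ : S.obj (op (UDCat.mk p))) : pullback S g (cls S f γ) = cls S (f ∘ g) γ := by
  conv_rhs => rw [← imageInj_comp_imageSurj f, Function.comp_assoc,
    cls_comp_injective S _ (imageInj_injective f)]
  rfl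

end Triple

noncomputable def lanPresheaf (S : UDCatᵒᵖ ⥤ Type) : UCatᵒᵖ ⥤ Type where
  obj X := Quot (TripleRel S X.unop.len)
  map g := TypeCat.ofHom (Triple.pullback S g.unop)
  map_id X := by
    ext x
    induction x using Quot.ind with | mk t => ?_
    change Triple.pullback S id (Quot.mk _ t) = Quot.mk _ t
    rw [Triple.mk_eq_cls, Triple.pullback_cls]
    rfl
  map_comp g g' := by
    ext x
    induction x using Quot.ind with | mk t => ?_
    change Triple.pullback S (g.unop ∘ g'.unop) (Quot.mk _ t) =
      Triple.pullback S g'.unop (Triple.pullback S g.unop (Quot.mk _ t))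
    simp only [Triple.mk_eq_cls, Triple.pullback_cls]
    rfl

theorem lanPresheaf_map_cls (S : UDCatᵒᵖ ⥤ Type) {X Y : UCatᵒᵖ} (g : X ⟶ Y) {p : ℕ}
    (f : Fin (X.unop.len + 1) → Fin (p + 1)) (γ : S.obj (op (UDCat.mk p))) :
    (lanPresheaf S).map g (Triple.cls S f γ) = Triple.cls S (f ∘ g.unop) γ :=
  Triple.pullback_cls S g.unop f γ

namespace Triple

variable {S : UDCatᵒᵖ ⥤ Type} {T : UCatᵒᵖ ⥤ Type}

noncomputable def desc (β : S ⟶ inclUDC.op ⋙ T) (n : ℕ) :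
    Quot (TripleRel S n) → T.obj (op (UCat.mk n)) :=
  Quot.lift (fun t => T.map (UCat.homOfFun t.1.2.1).op (β.app _ t.1.2.2))
    fun t t' ⟨φ, hφ, hf, hγ⟩ => by
      dsimp only
      rw [hγ, hf]
      exact (congrArg _ (naturality_homOfInjective β hφ.injective _)).trans
        (T.map_comp_apply _ _ _).symm

theorem desc_cls (β : S ⟶ inclUDC.op ⋙ T) {n p : ℕ} (f : Fin (n + 1) → Fin (p + 1))
    (γ : S.obj (op (UDCat.mk p))) :
    desc β n (cls S f γ) = T.map (UCat.homOfFun f).op (β.app _ γ) := by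
  have hf := congrArg (fun u => T.map (UCat.homOfFun u).op (β.app _ γ))
    (imageInj_comp_imageSurj f)
  exact (congrArg _ (naturality_homOfInjective β _ γ)).trans
    ((T.map_comp_apply _ _ _).symm.trans hf)

end Triple

noncomputable def lanHomEquiv (S : UDCatᵒᵖ ⥤ Type) (T : UCatᵒᵖ ⥤ Type) :
    (lanPresheaf S ⟶ T) ≃ (S ⟶ inclUDC.op ⋙ T) where
  toFun α :=
    { app P := TypeCat.ofHom fun γ => α.app (op (UCat.mk P.unop.len))
        (Triple.cls S (p := P.unop.len) id γ)
      naturality P Q u := by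
        ext γ
        exact (congrArg (α.app _) ((Triple.cls_comp_injective S id u.unop.2 γ).symm.trans
          (lanPresheaf_map_cls S (inclUDC.op.map u) id γ).symm)).trans (α.naturality_apply _ _) }
  invFun β :=
    { app X := TypeCat.ofHom (Triple.desc β X.unop.len)
      naturality X Y g := by
        ext x
        induction x using Quot.ind with | mk t => ?_
        change Triple.desc β _ ((lanPresheaf S).map g (Quot.mk _ t)) =
          T.map g (Triple.desc β _ (Quot.mk _ t))
        rw [Triple.mk_eq_cls, lanPresheaf_map_cls, Triple.desc_cls, Triple.desc_cls]
        exact T.map_comp_apply (UCat.homOfFun t.1.2.1).op g _ }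
  left_inv α := by
    ext X x
    induction x using Quot.ind with | mk t => ?_
    change Triple.desc _ _ (Quot.mk _ t) = α.app X (Quot.mk _ t)
    rw [Triple.mk_eq_cls, Triple.desc_cls]
    exact (α.naturality_apply (UCat.homOfFun t.1.2.1).op _).symm.trans
      (congrArg _ (lanPresheaf_map_cls S _ id _))
  right_inv β := by
    ext P γ
    exact (Triple.desc_cls _ id γ).trans (T.map_id_apply _ _)

theorem lanHomEquiv_comp (S : UDCatᵒᵖ ⥤ Type) {T T' : UCatᵒᵖ ⥤ Type} (α : lanPresheaf S ⟶ T)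
    (g : T ⟶ T') :
    lanHomEquiv S T' (α ≫ g) =
      lanHomEquiv S T α ≫ ((Functor.whiskeringLeft UDCatᵒᵖ UCatᵒᵖ Type).obj inclUDC.op).map g :=
  rfl

noncomputable def lanFunctor : (UDCatᵒᵖ ⥤ Type) ⥤ (UCatᵒᵖ ⥤ Type) :=
  Adjunction.leftAdjointOfEquiv (G := (Functor.whiskeringLeft UDCatᵒᵖ UCatᵒᵖ Type).obj inclUDC.op)
    (F_obj := lanPresheaf) lanHomEquiv (fun S _ _ g α => lanHomEquiv_comp S α g)

noncomputable def lanAdjunction :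
    lanFunctor ⊣ (Functor.whiskeringLeft UDCatᵒᵖ UCatᵒᵖ Type).obj inclUDC.op :=
  Adjunction.adjunctionOfEquivLeft _ _

/-- for any left adjoint `H` of the restriction functor along `ιᵒᵖ`,
any presheaf `S` on the injective category and any `n`, the set of `n`-simplices of
`H(S)` is in bijection with the quotient of the set of triples `(p, f, γ)` (with `f`
surjective) by the equivalence relation `TripleRel`. -/
theorem stmt15 (H : (UDCatᵒᵖ ⥤ Type) ⥤ (UCatᵒᵖ ⥤ Type))
    (adj : H ⊣ (Functor.whiskeringLeft UDCatᵒᵖ UCatᵒᵖ Type).obj inclUDC.op)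
    (S : UDCatᵒᵖ ⥤ Type) (n : ℕ) :
    Nonempty ((H.obj S).obj (op (UCat.mk n)) ≃ Quot (TripleRel S n)) :=
  ⟨(((adj.leftAdjointUniq lanAdjunction).app S).app (op (UCat.mk n))).toEquiv⟩
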